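/- Time-derivative of the h-action: the function F(r) = ∫_τ^r f*(f'(h(x−y, r, τ) e^{β(θ)})) e^{−β(θ)} dθ is differentiable in r and F'(r) = − f(h(x−y, r, τ) e^{β(r)}) e^{−β(r)}, provided h(x−y, r, τ) is the h-parameter for fixed displacement x−y between times τ and r. -/

import Mathlib

/-!
By the Fenchel–Young equality `f*(f' u) = u f' u - f u`, the integrand at time `s` equals
`h s · f'(h s e^β) - f(h s e^β) e^{-β}`, so for `s > τ` the fixed-displacement constraint gives
`F s = h s (x - y) - G (h s) s` with `G p s = ∫_τ^s f(p e^β) e^{-β}`. As `∂_p G p s = ∫_τ^s f'(p e^β)`,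
which is `x - y` at `p = h s`, the two terms containing `h' r` cancel, and only
`∂_s G = f(h r e^{β r}) e^{-β r}` survives.
-/

open Real Set Filter intervalIntegral

noncomputable def conjFn (f : ℝ → ℝ) (u : ℝ) : ℝ := ⨆ v : ℝ, (u * v - f v)

open Topology Function
open scoped Interval

theorem ConvexOn.deriv_mul_sub_le_sub {f : ℝ → ℝ} (hf : ConvexOn ℝ univ f) {u : ℝ}
    (hd : DifferentiableAt ℝ f u) (v : ℝ) : deriv f u * (v - u) ≤ f v - f u := by
  rcases lt_trichotomy u v with huv | rfl | hvu
  · have := hf.deriv_le_slope (mem_univ u) (mem_univ v) huv hd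
    rwa [slope_def_field, le_div_iff₀ (sub_pos.mpr huv)] at this
  · simp
  · have := hf.slope_le_deriv (mem_univ v) (mem_univ u) hvu hd
    rw [slope_def_field, div_le_iff₀ (sub_pos.mpr hvu)] at this
    linarith

theorem conjFn_deriv {f : ℝ → ℝ} (hf : ConvexOn ℝ univ f) {u : ℝ}
    (hd : DifferentiableAt ℝ f u) : conjFn f (deriv f u) = u * deriv f u - f u := by
  have hle : ∀ v, deriv f u * v - f v ≤ u * deriv f u - f u := fun v => by
    linarith [hf.deriv_mul_sub_le_sub hd v]
  refine le_antisymm (ciSup_le hle) ?_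
  calc u * deriv f u - f u = deriv f u * u - f u := by ring
    _ ≤ conjFn f (deriv f u) := le_ciSup ⟨_, forall_mem_range.2 hle⟩ u

section ParametricIntegral

variable {E : Type*} [NormedAddCommGroup E] [NormedSpace ℝ E]

theorem hasDerivAt_integral_from_of_continuous_uncurry [CompleteSpace E] {ψ : ℝ → ℝ → E}
    (hψ : Continuous (uncurry ψ)) (a : ℝ) :
    HasDerivAt (fun s => ∫ θ in a..s, ψ s θ) (ψ a a) a := by
  rw [hasDerivAt_iff_isLittleO, Asymptotics.isLittleO_iff]
  intro ε hε
  obtain ⟨δ, hδ, hclose⟩ := Metric.continuousAt_iff.mp (hψ.continuousAt (x := (a, a))) ε hε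
  filter_upwards [Metric.ball_mem_nhds a hδ] with s hs
  have hbound : ∀ θ ∈ Ι a s, ‖ψ s θ - ψ a a‖ ≤ ε := fun θ hθ => by
    have hθs : dist θ a ≤ dist s a := by
      simpa only [Real.dist_eq] using abs_sub_left_of_mem_uIcc (uIoc_subset_uIcc hθ)
    rw [← dist_eq_norm]
    exact (hclose (x := (s, θ)) (max_lt hs (hθs.trans_lt hs))).le
  have hint : IntervalIntegrable (ψ s) MeasureTheory.volume a s :=
    (hψ.comp (Continuous.prodMk_right s)).intervalIntegrable a s
  calc ‖(∫ θ in a..s, ψ s θ) - (∫ θ in a..a, ψ a θ) - (s - a) • ψ a a‖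
      = ‖∫ θ in a..s, (ψ s θ - ψ a a)‖ := by
        rw [integral_same, sub_zero, integral_sub hint intervalIntegrable_const, integral_const]
    _ ≤ ε * |s - a| := norm_integral_le_of_norm_le_const hbound
    _ = ε * ‖s - a‖ := by rw [Real.norm_eq_abs]

theorem hasDerivAt_integral_of_continuous_uncurry {F F' : ℝ → ℝ → E}
    (hF : Continuous (uncurry F)) (hF' : Continuous (uncurry F'))
    (hderiv : ∀ p θ, HasDerivAt (F · θ) (F' p θ) p) (a b p₀ : ℝ) :
    HasDerivAt (fun p => ∫ θ in a..b, F p θ) (∫ θ in a..b, F' p₀ θ) p₀ := by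
  obtain ⟨C, hC⟩ := ((isCompact_closedBall p₀ 1).prod isCompact_uIcc).exists_bound_of_continuousOn
    (hF'.continuousOn (s := Metric.closedBall p₀ 1 ×ˢ uIcc a b))
  have hcont : ∀ p, Continuous (F p) := fun p => hF.comp (Continuous.prodMk_right p)
  refine (hasDerivAt_integral_of_dominated_loc_of_deriv_le (bound := fun _ => C)
    (Metric.ball_mem_nhds p₀ zero_lt_one) (.of_forall fun p => (hcont p).aestronglyMeasurable)
    ((hcont p₀).intervalIntegrable a b)
    (hF'.comp (Continuous.prodMk_right p₀)).aestronglyMeasurable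
    (.of_forall fun θ hθ p hp => hC (p, θ) ⟨Metric.ball_subset_closedBall hp, uIoc_subset_uIcc hθ⟩)
    intervalIntegrable_const (.of_forall fun θ _ p _ => hderiv p θ)).2

end ParametricIntegral

theorem hasDerivAt_comp_mul_exp_mul_exp_neg {f : ℝ → ℝ} (hf : Differentiable ℝ f) (b p : ℝ) :
    HasDerivAt (fun p => f (p * exp b) * exp (-b)) (deriv f (p * exp b)) p := by
  have := ((hf _).hasDerivAt.comp p (hasDerivAt_mul_const (exp b))).mul_const (exp (-b))
  rwa [mul_assoc, ← exp_add, add_neg_cancel, exp_zero, mul_one] at this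

theorem hasDerivAt_integral_comp_mul_exp {f β : ℝ → ℝ} (hf : ContDiff ℝ 1 f) (hβ : Continuous β)
    (a b p : ℝ) :
    HasDerivAt (fun p => ∫ θ in a..b, f (p * exp (β θ)) * exp (-β θ))
      (∫ θ in a..b, deriv f (p * exp (β θ))) p := by
  have hfc := hf.continuous
  have hf'c := hf.continuous_deriv le_rfl
  exact hasDerivAt_integral_of_continuous_uncurry (by fun_prop) (by fun_prop)
    (fun p θ => hasDerivAt_comp_mul_exp_mul_exp_neg (hf.differentiable one_ne_zero) (β θ) p) a b p

theorem integral_conjFn_deriv_comp_mul_exp {f β : ℝ → ℝ} (hf : ContDiff ℝ 1 f)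
    (hconv : ConvexOn ℝ univ f) (hβ : Continuous β) (a b p : ℝ) :
    ∫ θ in a..b, conjFn f (deriv f (p * exp (β θ))) * exp (-β θ)
      = p * (∫ θ in a..b, deriv f (p * exp (β θ)))
        - ∫ θ in a..b, f (p * exp (β θ)) * exp (-β θ) := by
  have hfc := hf.continuous
  have hf'c := hf.continuous_deriv le_rfl
  have hpt : ∀ θ, conjFn f (deriv f (p * exp (β θ))) * exp (-β θ)
      = p * deriv f (p * exp (β θ)) - f (p * exp (β θ)) * exp (-β θ) := fun θ => by
    have hexp : exp (β θ) * exp (-β θ) = 1 := by rw [← exp_add, add_neg_cancel, exp_zero]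
    rw [conjFn_deriv hconv (hf.differentiable one_ne_zero _)]
    linear_combination p * deriv f (p * exp (β θ)) * hexp
  simp only [hpt]
  rw [integral_sub (by apply Continuous.intervalIntegrable; fun_prop)
    (by apply Continuous.intervalIntegrable; fun_prop), integral_const_mul]

theorem haction_time_derivative_general (f β h : ℝ → ℝ)
    (hf : ContDiff ℝ 2 f)
    (hconv : StrictConvexOn ℝ Set.univ f)
    (hβ : ContDiff ℝ 1 β)
    (x y τ : ℝ)
    (hh : ∀ s, τ < s → x - y = ∫ θ in τ..s, deriv f (h s * Real.exp (β θ)))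
    (hhd : Differentiable ℝ h)
    (r : ℝ) (hr : τ < r) :
    HasDerivAt
      (fun s => ∫ θ in τ..s,
        conjFn f (deriv f (h s * Real.exp (β θ))) * Real.exp (-β θ))
      (-(f (h r * Real.exp (β r)) * Real.exp (-β r))) r := by
  have hf1 : ContDiff ℝ 1 f := hf.of_le (by norm_num)
  have hfc := hf.continuous
  have hβc := hβ.continuous
  have hhc := hhd.continuous
  have hL : HasDerivAt (fun p => ∫ θ in τ..r, f (p * exp (β θ)) * exp (-β θ)) (x - y) (h r) := by
    simpa only [hh r hr] using hasDerivAt_integral_comp_mul_exp hf1 hβc τ r (h r)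
  have htail : HasDerivAt (fun s => ∫ θ in r..s, f (h s * exp (β θ)) * exp (-β θ))
      (f (h r * exp (β r)) * exp (-β r)) r :=
    hasDerivAt_integral_from_of_continuous_uncurry
      (ψ := fun s θ => f (h s * exp (β θ)) * exp (-β θ)) (by fun_prop) r
  -- `G (h s) s = G (h s) r + ∫_r^s`, separating the dependence through `h` from the endpoint
  have hsplit := ((hhd r).hasDerivAt.mul_const (x - y)).sub
    ((hL.comp r (hhd r).hasDerivAt).add htail)
  refine (hsplit.congr_deriv (by ring)).congr_of_eventuallyEq ?_
  filter_upwards [Ioi_mem_nhds hr] with s hs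
  have hint : ∀ a b, IntervalIntegrable (fun θ => f (h s * exp (β θ)) * exp (-β θ))
      MeasureTheory.volume a b := fun a b => by
    apply Continuous.intervalIntegrable; fun_prop
  rw [integral_conjFn_deriv_comp_mul_exp hf1 hconv.convexOn hβc, ← hh s hs,
    ← integral_add_adjacent_intervals (hint τ r) (hint r s)]
  rfl

/-- Time derivative of the `h`-action: with `h r` the `h`-curve parameter for
the fixed displacement `x - y` between times `τ` and `r`, the function
`F(r) = ∫_τ^r f*(f'(h r · e^{β θ})) e^{-β θ} dθ` is differentiable with
`F'(r) = -f(h r · e^{β r}) e^{-β r}`. -/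
theorem haction_time_derivative (f β h : ℝ → ℝ)
    (hf : ContDiff ℝ 2 f)
    (hconv : StrictConvexOn ℝ Set.univ f)
    (hsuper : Tendsto (fun u => f u / |u|) (cocompact ℝ) atTop)
    (hβ : ContDiff ℝ 1 β)
    (x y τ : ℝ)
    (hh : ∀ s, τ < s → x - y = ∫ θ in τ..s, deriv f (h s * Real.exp (β θ)))
    (hhd : Differentiable ℝ h)
    (r : ℝ) (hr : τ < r) :
    HasDerivAt
      (fun s => ∫ θ in τ..s,
        conjFn f (deriv f (h s * Real.exp (β θ))) * Real.exp (-β θ))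
      (-(f (h r * Real.exp (β r)) * Real.exp (-β r))) r :=
  haction_time_derivative_general f β h hf hconv hβ x y τ hh hhd r hr
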